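/- arXiv:1903.03106 — 6 statements merged into one kernel-verified Lean document; each statement's English description precedes it below -/
import Mathlib

section
/- Let d > 1, r > 0, and let K be an origin-symmetric convex body in R^d which is a generating set. For any set X ⊆ R^d with X_K^r := ∩_{x∈X} B_K[x,r] nonempty, the Minkowski difference identity X_K^r + (−conv_{r,K}(X)) = B_K[o, r] holds; that is, X_K^r − conv_{r,K}(X) = rK, where conv_{r,K}(X) := ∩{B_K[x,r] : X ⊆ B_K[x,r]} is the r-ball convex hull of X. -/
open MeasureTheory Set
open scoped Pointwise

/-- If `K` is a generating o-symmetric convex body and the `r`-ball body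
`X_K^r = ⋂_{x ∈ X} B_K[x,r]` is nonempty, then the Minkowski difference identity
`X_K^r − conv_{r,K}(X) = rK` holds, where
`conv_{r,K}(X) = ⋂ {B_K[y,r] : X ⊆ B_K[y,r]}` is the `r`-ball convex hull of `X`. -/
theorem ball_body_minus_ball_hull
    (d : ℕ) (hd : 1 < d)
    (K : Set (EuclideanSpace ℝ (Fin d)))
    (hKcomp : IsCompact K) (hKconv : Convex ℝ K)
    (hKint : (interior K).Nonempty) (hKsymm : ∀ x ∈ K, -x ∈ K)
    (hKgen : ∀ C : Set (EuclideanSpace ℝ (Fin d)), C.Nonempty →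
      (⋂ x ∈ C, ({x} + K)).Nonempty →
      ∃ A'' : Set (EuclideanSpace ℝ (Fin d)), IsCompact A'' ∧ Convex ℝ A'' ∧
        (⋂ x ∈ C, ({x} + K)) + A'' = K)
    (r : ℝ) (hr : 0 < r)
    (X : Set (EuclideanSpace ℝ (Fin d))) (hX : X.Nonempty)
    (hXr : (⋂ x ∈ X, ({x} + r • K)).Nonempty) :
    (⋂ x ∈ X, ({x} + r • K)) -
      (⋂ y ∈ {y : EuclideanSpace ℝ (Fin d) | X ⊆ ({y} + r • K)}, ({y} + r • K)) =
      r • K := by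
  have hr0 : r ≠ 0 := ne_of_gt hr
  -- membership in a translate
  have hmemt : ∀ (y z : EuclideanSpace ℝ (Fin d)) (s : Set (EuclideanSpace ℝ (Fin d))),
      z ∈ ({y} + s) ↔ z - y ∈ s := by
    intro y z s
    constructor
    · rintro ⟨a, ha, b, hb, rfl⟩
      simp only [Set.mem_singleton_iff] at ha
      subst ha; simpa using hb
    · intro h; exact ⟨y, rfl, z - y, h, by simp⟩
  -- symmetry of r • K
  have hrKsymm : ∀ z ∈ r • K, -z ∈ r • K := by
    rintro z ⟨k, hk, rfl⟩
    exact ⟨-k, hKsymm k hk, by simp⟩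
  set A := ⋂ x ∈ X, ({x} + r • K) with hA
  -- the index set of the hull equals A
  have hidx : {y : EuclideanSpace ℝ (Fin d) | X ⊆ ({y} + r • K)} = A := by
    ext y
    simp only [Set.mem_setOf_eq, hA, Set.mem_iInter]
    constructor
    · intro h x hx
      rw [hmemt]
      have := hrKsymm _ ((hmemt y x _).1 (h hx))
      simpa using this
    · intro h x hx
      rw [hmemt]
      have := hrKsymm _ ((hmemt x y _).1 (h x hx))
      simpa using this
  rw [hidx]
  -- rescaled ball body
  have hscale : (⋂ x ∈ r⁻¹ • X, ({x} + K)) = r⁻¹ • A := by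
    ext z
    simp only [Set.mem_iInter, hA]
    constructor
    · intro h
      refine ⟨r • z, ?_, by simp [smul_smul, inv_mul_cancel₀ hr0]⟩
      simp only [Set.mem_iInter]
      intro x hx
      rw [hmemt]
      have := h (r⁻¹ • x) ⟨x, hx, rfl⟩
      rw [hmemt] at this
      refine ⟨z - r⁻¹ • x, this, ?_⟩
      simp [smul_sub, smul_smul, mul_inv_cancel₀ hr0]
    · rintro ⟨a, ha, rfl⟩ x ⟨x₀, hx₀, rfl⟩
      simp only [Set.mem_iInter] at ha
      obtain ⟨k, hk, hak⟩ := (hmemt x₀ a _).1 (ha x₀ hx₀)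
      rw [hmemt]
      have heq : r⁻¹ • a - r⁻¹ • x₀ = k := by
        rw [← smul_sub]
        have h2 : a - x₀ = r • k := hak.symm
        rw [h2, smul_smul, inv_mul_cancel₀ hr0, one_smul]
      rw [heq]; exact hk
  obtain ⟨A'', -, -, hsum⟩ := hKgen (r⁻¹ • X) hX.smul_set
    (by rw [hscale]; exact hXr.smul_set)
  rw [hscale] at hsum
  -- A + r • A'' = r • K
  have hD : A + r • A'' = r • K := by
    ext z
    constructor
    · rintro ⟨a, ha, -, ⟨e, he, rfl⟩, rfl⟩
      have : r⁻¹ • a + e ∈ K := by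
        rw [← hsum]; exact ⟨r⁻¹ • a, ⟨a, ha, rfl⟩, e, he, rfl⟩
      exact ⟨r⁻¹ • a + e, this, by
        simp [smul_add, smul_smul, mul_inv_cancel₀ hr0]⟩
    · rintro ⟨k, hk, rfl⟩
      rw [← hsum] at hk
      obtain ⟨-, ⟨a, ha, rfl⟩, e, he, rfl⟩ := hk
      refine ⟨a, ha, r • e, ⟨e, he, rfl⟩, ?_⟩
      simp [smul_add, smul_smul, mul_inv_cancel₀ hr0]
  -- main set equality
  ext z
  constructor
  · rintro ⟨a, ha, b, hb, rfl⟩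
    simp only [Set.mem_iInter] at hb
    have hba : b - a ∈ r • K := (hmemt a b _).1 (hb a ha)
    have := hrKsymm _ hba
    simpa using this
  · intro hz
    rw [← hD] at hz
    obtain ⟨a, ha, e, he, rfl⟩ := hz
    refine ⟨a, ha, -e, ?_, by abel⟩
    simp only [Set.mem_iInter]
    intro a' ha'
    rw [hmemt]
    have : a' + e ∈ r • K := by rw [← hD]; exact ⟨a', ha', e, he, rfl⟩
    have := hrKsymm _ this
    simpa [sub_eq_add_neg, add_comm] using this
end

section
/- Let K be an origin-symmetric convex body in R^d whose balls are volumetric maximizers for r-ball bodies (i.e., V_d(A_K^r) ≤ (r − r_K(A))^d V_d(K) for every compact A with V_d(A) > 0 and every r > r_K(A)). If r > 0, λ > 0, d > 1, N ≥ 3^d, and Q is a uniform contraction of P with separating value λ in the norm generated by K, then V_d(P_K^r) ≤ V_d(Q_K^r). -/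
open MeasureTheory Set
open scoped Pointwise ENNReal Topology

set_option maxHeartbeats 1000000 in
/-- If the balls of the Minkowski space generated by `K` are volumetric
maximizers for `r`-ball bodies, `N ≥ 3^d`, and `Q` is a uniform contraction of `P` with
separating value `λ`, then `V(P_K^r) ≤ V(Q_K^r)`. -/
theorem intersection_volume_of_volumetric_maximizer
    (d N : ℕ) (hd : 1 < d) (hN : 3 ^ d ≤ N)
    (K : Set (EuclideanSpace ℝ (Fin d)))
    (hKcomp : IsCompact K) (hKconv : Convex ℝ K)
    (hKint : (interior K).Nonempty) (hKsymm : ∀ x ∈ K, -x ∈ K)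
    (hmax : ∀ A : Set (EuclideanSpace ℝ (Fin d)), IsCompact A → A.Nonempty →
      0 < volume A → ∀ ρ : ℝ, 0 ≤ ρ →
      ENNReal.ofReal (ρ ^ d) * volume K = volume A → ∀ r : ℝ, ρ < r →
      volume (⋂ a ∈ A, ({a} + r • K)) ≤ ENNReal.ofReal ((r - ρ) ^ d) * volume K)
    (r lam : ℝ) (hr : 0 < r) (hlam : 0 < lam)
    (p q : Fin N → EuclideanSpace ℝ (Fin d))
    (hQ : ∀ i j, i ≠ j → gauge K (q i - q j) ≤ lam)
    (hP : ∀ i j, i ≠ j → lam ≤ gauge K (p i - p j)) :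
    volume (⋂ i, ({p i} + r • K)) ≤ volume (⋂ i, ({q i} + r • K)) := by
  have hd0 : d ≠ 0 := by omega
  -- 0 is an interior point of K
  obtain ⟨y, hy⟩ := hKint
  have hsubneg : -K ⊆ K := fun x hx => by
    rw [Set.mem_neg] at hx
    simpa using hKsymm _ hx
  have hyn : -y ∈ interior K := by
    have hopen : IsOpen (-(interior K)) := isOpen_interior.neg
    have hsub2 : -(interior K) ⊆ K := fun x hx => hsubneg (Set.neg_subset_neg.2 interior_subset hx)
    exact interior_maximal hsub2 hopen (Set.neg_mem_neg.2 hy)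
  have h0int : (0 : EuclideanSpace ℝ (Fin d)) ∈ interior K := by
    have h := hKconv.interior hy hyn (by norm_num : (0:ℝ) ≤ 1/2)
      (by norm_num : (0:ℝ) ≤ 1/2) (by norm_num)
    simpa using h
  have hKnhds : K ∈ 𝓝 (0 : EuclideanSpace ℝ (Fin d)) := mem_interior_iff_mem_nhds.1 h0int
  have habs : Absorbent ℝ K := absorbent_nhds_zero hKnhds
  have h0K : (0 : EuclideanSpace ℝ (Fin d)) ∈ K := interior_subset h0int
  have hμK0 : 0 < volume K :=
    lt_of_lt_of_le (isOpen_interior.measure_pos volume ⟨y, hy⟩) (measure_mono interior_subset)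
  have hμKt : volume K ≠ ⊤ := hKcomp.measure_lt_top.ne
  have htri : ∀ x y, gauge K (x + y) ≤ gauge K x + gauge K y := gauge_add_le hKconv habs
  have hgneg : ∀ x, gauge K (-x) = gauge K x := gauge_neg hKsymm
  -- membership in dilates of K versus the gauge
  have hmemsmul : ∀ {c : ℝ}, 0 < c → ∀ {x : EuclideanSpace ℝ (Fin d)},
      (x ∈ c • K ↔ gauge K x ≤ c) := by
    intro c hc x
    constructor
    · exact fun hx => gauge_le_of_mem hc.le hx
    · intro hx
      have hn : c • K ∈ 𝓝 (0 : EuclideanSpace ℝ (Fin d)) := by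
        have h1 : (0 : EuclideanSpace ℝ (Fin d)) ∈ interior (c • K) := by
          rw [interior_smul₀ hc.ne']
          have := Set.smul_mem_smul_set (a := c) h0int
          simpa using this
        exact mem_interior_iff_mem_nhds.1 h1
      have hcl : IsClosed (c • K) := by
        rw [← Set.image_smul]
        exact (hKcomp.image (continuous_const_smul c)).isClosed
      have hg : gauge (c • K) x ≤ 1 := by
        rw [gauge_smul_left_of_nonneg hc.le, Pi.smul_apply, smul_eq_mul]
        have h2 : c⁻¹ * gauge K x ≤ c⁻¹ * c :=
          mul_le_mul_of_nonneg_left hx (inv_nonneg.2 hc.le)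
        rwa [inv_mul_cancel₀ hc.ne'] at h2
      have := (gauge_le_one_iff_mem_closure (hKconv.smul c) hn).1 hg
      rwa [hcl.closure_eq] at this
  have hmemT : ∀ (a x : EuclideanSpace ℝ (Fin d)) {c : ℝ}, 0 < c →
      (x ∈ {a} + c • K ↔ gauge K (x - a) ≤ c) := by
    intro a x c hc
    rw [Set.singleton_add, Set.image_add_left, Set.mem_preimage, neg_add_eq_sub]
    exact hmemsmul hc
  -- translation invariance + scaling of volume
  have hvolT : ∀ (a : EuclideanSpace ℝ (Fin d)) (c : ℝ), 0 ≤ c →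
      volume ({a} + c • K) = ENNReal.ofReal (c ^ d) * volume K := by
    intro a c hc
    rw [Set.singleton_add, Set.image_add_left, measure_preimage_add,
      Measure.addHaar_smul_of_nonneg volume hc, finrank_euclideanSpace_fin]
  -- main case split
  rcases Set.eq_empty_or_nonempty (⋂ i, ({p i} + r • K)) with hPe | ⟨x₀, hx₀⟩
  · rw [hPe]; simp
  have hx₀i : ∀ i, gauge K (x₀ - p i) ≤ r := fun i =>
    (hmemT (p i) x₀ hr).1 (Set.mem_iInter.1 hx₀ i)
  have hl2 : (0:ℝ) < lam / 2 := by linarith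
  have hN0 : 0 < N := lt_of_lt_of_le (pow_pos (by norm_num) d) hN
  set i₀ : Fin N := ⟨0, hN0⟩ with hi₀
  set A : Set (EuclideanSpace ℝ (Fin d)) := ⋃ i, ({p i} + (lam / 2) • K) with hA
  -- the interiors of the small balls are pairwise disjoint
  set U : Fin N → Set (EuclideanSpace ℝ (Fin d)) :=
    fun i => {p i} + interior ((lam / 2) • K) with hU
  have hgaugeInt : ∀ i x, x ∈ U i → gauge K (x - p i) < lam / 2 := by
    intro i x hx
    simp only [hU, Set.singleton_add, Set.image_add_left, Set.mem_preimage] at hx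
    have h1 : gauge ((lam/2) • K) (-(p i) + x) < 1 := interior_subset_gauge_lt_one _ hx
    rw [gauge_smul_left_of_nonneg hl2.le, Pi.smul_apply, smul_eq_mul, neg_add_eq_sub] at h1
    have h2 := mul_lt_mul_of_pos_left h1 hl2
    rwa [← mul_assoc, mul_inv_cancel₀ hl2.ne', one_mul, mul_one] at h2
  have hdisj : Pairwise (Function.onFun Disjoint U) := by
    intro i j hij
    refine Set.disjoint_left.2 fun x hxi hxj => ?_
    have h1 := hgaugeInt i x hxi
    have h2 := hgaugeInt j x hxj
    have h3 : gauge K (p i - p j) ≤ gauge K (p i - x) + gauge K (x - p j) := by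
      have := htri (p i - x) (x - p j)
      simpa [sub_add_sub_cancel] using this
    have h4 : gauge K (p i - x) = gauge K (x - p i) := by
      rw [← neg_sub x (p i), hgneg]
    have h5 := hP i j hij
    linarith
  have hvolU : ∀ i, volume (U i) = ENNReal.ofReal ((lam/2) ^ d) * volume K := by
    intro i
    have hIntEq : volume (interior ((lam/2) • K)) = volume ((lam/2) • K) := by
      refine le_antisymm (measure_mono interior_subset) ?_
      calc volume ((lam/2) • K)
          ≤ volume (interior ((lam/2) • K) ∪ frontier ((lam/2) • K)) := by
            refine measure_mono ?_
            rw [← closure_eq_interior_union_frontier]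
            exact subset_closure
        _ ≤ volume (interior ((lam/2) • K)) + volume (frontier ((lam/2) • K)) :=
            measure_union_le _ _
        _ = volume (interior ((lam/2) • K)) := by
            rw [(hKconv.smul _).addHaar_frontier volume, add_zero]
    simp only [hU]
    rw [Set.singleton_add, Set.image_add_left, measure_preimage_add, hIntEq,
      Measure.addHaar_smul_of_nonneg volume hl2.le, finrank_euclideanSpace_fin]
  have hvolA : volume A = (N : ℝ≥0∞) * (ENNReal.ofReal ((lam/2) ^ d) * volume K) := by
    refine le_antisymm ?_ ?_
    · calc volume A ≤ ∑' i : Fin N, volume ({p i} + (lam/2) • K) := measure_iUnion_le _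
        _ = ∑' _i : Fin N, ENNReal.ofReal ((lam/2) ^ d) * volume K :=
            tsum_congr fun i => hvolT (p i) _ hl2.le
        _ = (N : ℝ≥0∞) * (ENNReal.ofReal ((lam/2) ^ d) * volume K) := by
            rw [tsum_fintype, Finset.sum_const, Finset.card_univ, Fintype.card_fin, nsmul_eq_mul]
    · have hsub : (⋃ i, U i) ⊆ A := by
        refine Set.iUnion_mono fun i => ?_
        exact Set.add_subset_add_left interior_subset
      calc (N : ℝ≥0∞) * (ENNReal.ofReal ((lam/2) ^ d) * volume K)
          = ∑' i : Fin N, volume (U i) := by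
            rw [tsum_fintype, Finset.sum_congr rfl fun i _ => hvolU i, Finset.sum_const,
              Finset.card_univ, Fintype.card_fin, nsmul_eq_mul]
        _ = volume (⋃ i, U i) :=
            (measure_iUnion hdisj fun i => (isOpen_interior.add_left).measurableSet).symm
        _ ≤ volume A := measure_mono hsub
  have hAcomp : IsCompact A := by
    refine isCompact_iUnion fun i => ?_
    have hsK : IsCompact ((lam/2) • K) := by
      rw [← Set.image_smul]
      exact hKcomp.image (continuous_const_smul _)
    exact isCompact_singleton.add hsK
  have hAne : A.Nonempty := by
    refine ⟨p i₀, Set.mem_iUnion.2 ⟨i₀, ?_⟩⟩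
    exact (hmemT _ _ hl2).2 (by rw [sub_self, gauge_zero]; positivity)
  have hA0 : 0 < volume A := by
    rw [hvolA]
    exact ENNReal.mul_pos (Nat.cast_ne_zero.2 hN0.ne')
      (ENNReal.mul_pos (ENNReal.ofReal_pos.2 (by positivity)).ne' hμK0.ne').ne'
  set ρ : ℝ := (N : ℝ) ^ ((d : ℝ)⁻¹) * (lam / 2) with hρ
  have hρpos : 0 < ρ := mul_pos (Real.rpow_pos_of_pos (by exact_mod_cast hN0) _) hl2
  have hρd : ρ ^ d = (N : ℝ) * (lam/2) ^ d := by
    rw [hρ, mul_pow, Real.rpow_inv_natCast_pow (Nat.cast_nonneg N) hd0]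
  have hρvol : ENNReal.ofReal (ρ ^ d) * volume K = volume A := by
    rw [hρd, ENNReal.ofReal_mul (Nat.cast_nonneg N), ENNReal.ofReal_natCast, hvolA, mul_assoc]
  have h3ρ : 3 * (lam / 2) ≤ ρ := by
    have h1 : ((3:ℝ)) ^ d ≤ (N : ℝ) := by exact_mod_cast hN
    have h2 : (((3:ℝ)) ^ d) ^ ((d : ℝ)⁻¹) ≤ (N : ℝ) ^ ((d : ℝ)⁻¹) :=
      Real.rpow_le_rpow (by positivity) h1 (by positivity)
    rw [Real.pow_rpow_inv_natCast (by norm_num) hd0] at h2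
    exact mul_le_mul_of_nonneg_right h2 hl2.le
  -- A is contained in a ball of radius r + lam/2 around x₀
  have hAsub : A ⊆ {x₀} + (r + lam/2) • K := by
    intro a ha
    obtain ⟨i, hi⟩ := Set.mem_iUnion.1 ha
    have h1 : gauge K (a - p i) ≤ lam / 2 := (hmemT _ _ hl2).1 hi
    refine (hmemT _ _ (by linarith)).2 ?_
    have h2 : gauge K (a - x₀) ≤ gauge K (a - p i) + gauge K (p i - x₀) := by
      have := htri (a - p i) (p i - x₀)
      simpa [sub_add_sub_cancel] using this
    have h3 : gauge K (p i - x₀) = gauge K (x₀ - p i) := by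
      rw [← neg_sub x₀ (p i), hgneg]
    have h4 := hx₀i i
    linarith
  have hvol_le : (N : ℝ) * (lam/2) ^ d ≤ (r + lam/2) ^ d := by
    have h1 : volume A ≤ ENNReal.ofReal ((r + lam/2) ^ d) * volume K := by
      calc volume A ≤ volume ({x₀} + (r + lam/2) • K) := measure_mono hAsub
        _ = ENNReal.ofReal ((r + lam/2) ^ d) * volume K := hvolT _ _ (by linarith)
    rw [← hρvol, hρd] at h1
    have h2 := (ENNReal.mul_le_mul_iff_left hμK0.ne' hμKt).1 h1
    exact (ENNReal.ofReal_le_ofReal_iff (by positivity)).1 h2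
  have hρle : ρ ≤ r + lam / 2 := by
    refine le_of_pow_le_pow_left₀ hd0 (by linarith) ?_
    rw [hρd]; exact hvol_le
  have hlr : lam ≤ r := by
    have := h3ρ.trans hρle
    linarith
  -- key upper bound, for every positive ε
  have hkey : ∀ ε : ℝ, 0 < ε →
      volume (⋂ i, ({p i} + r • K)) ≤ ENNReal.ofReal ((r - lam + ε) ^ d) * volume K := by
    intro ε hε
    have hsub2 : (⋂ i, ({p i} + r • K)) ⊆ ⋂ a ∈ A, ({a} + (r + lam/2 + ε) • K) := by
      intro x hx
      refine Set.mem_iInter₂.2 fun a ha => ?_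
      obtain ⟨i, hi⟩ := Set.mem_iUnion.1 ha
      have h1 : gauge K (a - p i) ≤ lam / 2 := (hmemT _ _ hl2).1 hi
      have h2 : gauge K (x - p i) ≤ r := (hmemT _ _ hr).1 (Set.mem_iInter.1 hx i)
      refine (hmemT _ _ (by linarith)).2 ?_
      have h3 : gauge K (x - a) ≤ gauge K (x - p i) + gauge K (p i - a) := by
        have := htri (x - p i) (p i - a)
        simpa [sub_add_sub_cancel] using this
      have h4 : gauge K (p i - a) = gauge K (a - p i) := by
        rw [← neg_sub a (p i), hgneg]
      linarith
    have hmax' := hmax A hAcomp hAne hA0 ρ hρpos.le hρvol (r + lam/2 + ε) (by linarith)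
    have hb : ENNReal.ofReal ((r + lam/2 + ε - ρ) ^ d) * volume K
        ≤ ENNReal.ofReal ((r - lam + ε) ^ d) * volume K := by
      refine mul_le_mul_left (ENNReal.ofReal_le_ofReal ?_) _
      exact pow_le_pow_left₀ (by linarith) (by linarith) d
    exact le_trans (measure_mono hsub2) (le_trans hmax' hb)
  -- pass to the limit ε → 0⁺
  have hlim : volume (⋂ i, ({p i} + r • K)) ≤ ENNReal.ofReal ((r - lam) ^ d) * volume K := by
    have h1 : Filter.Tendsto (fun ε : ℝ => (r - lam + ε) ^ d)
        (nhdsWithin 0 (Set.Ioi 0)) (nhds ((r - lam) ^ d)) := by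
      have hc : Continuous fun ε : ℝ => (r - lam + ε) ^ d := by continuity
      have h2 := hc.tendsto 0
      simpa using h2.mono_left nhdsWithin_le_nhds
    have htend : Filter.Tendsto (fun ε : ℝ => ENNReal.ofReal ((r - lam + ε) ^ d) * volume K)
        (nhdsWithin 0 (Set.Ioi 0)) (nhds (ENNReal.ofReal ((r - lam) ^ d) * volume K)) :=
      ENNReal.Tendsto.mul_const ((ENNReal.continuous_ofReal.tendsto _).comp h1) (Or.inr hμKt)
    refine ge_of_tendsto htend ?_
    filter_upwards [self_mem_nhdsWithin] with ε hε using hkey ε hε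
  -- lower bound for the Q-intersection
  have hQsub : {q i₀} + (r - lam) • K ⊆ ⋂ i, ({q i} + r • K) := by
    intro y hy
    have hgy : gauge K (y - q i₀) ≤ r - lam := by
      rcases (sub_nonneg.2 hlr).eq_or_lt with heq | hlt
      · rw [← heq] at hy ⊢
        rw [zero_smul_set ⟨0, h0K⟩] at hy
        have hyq : y = q i₀ := by simpa [Set.mem_add] using hy
        rw [hyq, sub_self, gauge_zero]
      · exact (hmemT _ _ hlt).1 hy
    refine Set.mem_iInter.2 fun i => ?_
    refine (hmemT _ _ hr).2 ?_
    have hq : gauge K (q i₀ - q i) ≤ lam := by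
      rcases eq_or_ne i i₀ with rfl | hne
      · rw [sub_self, gauge_zero]; exact hlam.le
      · exact hQ i₀ i fun h => hne h.symm
    have h3 : gauge K (y - q i) ≤ gauge K (y - q i₀) + gauge K (q i₀ - q i) := by
      have := htri (y - q i₀) (q i₀ - q i)
      simpa [sub_add_sub_cancel] using this
    linarith
  have hRHS : ENNReal.ofReal ((r - lam) ^ d) * volume K ≤ volume (⋂ i, ({q i} + r • K)) := by
    calc ENNReal.ofReal ((r - lam) ^ d) * volume K
        = volume ({q i₀} + (r - lam) • K) := (hvolT _ _ (by linarith)).symm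
      _ ≤ volume (⋂ i, ({q i} + r • K)) := measure_mono hQsub
  exact hlim.trans hRHS
end

section
/- Let K be an origin-symmetric convex body in R^d, λ > 0, r > 0, and let Q = {q_1,...,q_N} ⊂ R^d satisfy ‖q_i − q_j‖_K ≤ λ for all i < j, with (d/(d+1))λ < r. Then V_d(Q_K^r) ≥ (r − (d/(d+1))λ)^d · V_d(K), where Q_K^r = ∩_i B_K[q_i, r]. -/
/-!
By Bohnenblust's theorem there is a point `c` with `‖c - q i‖_K ≤ ρ := (d / (d + 1)) λ` for every
`i`. The triangle inequality for the gauge then puts `B_K[c, r - ρ]` inside every `B_K[q i, r]`,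
and that ball has volume `(r - ρ) ^ d V(K)`.
-/
open MeasureTheory Set
open scoped Pointwise

theorem mem_singleton_add_iff {G : Type*} [AddCommGroup G] {a x : G} {s : Set G} :
    x ∈ {a} + s ↔ x - a ∈ s := by
  rw [singleton_add, image_add_left, mem_preimage, neg_add_eq_sub]

section Gauge

variable {E : Type*} [NormedAddCommGroup E] [NormedSpace ℝ E] {K : Set E}

theorem Convex.zero_mem_interior_of_neg_mem (hconv : Convex ℝ K) (hsymm : ∀ x ∈ K, -x ∈ K)
    (hint : (interior K).Nonempty) : (0 : E) ∈ interior K := by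
  obtain ⟨x, hx⟩ := hint
  have hx_neg : -x ∈ interior K :=
    interior_maximal (fun y hy => by simpa using hsymm _ (interior_subset hy)) isOpen_interior.neg
      (neg_mem_neg.2 hx)
  simpa using hconv.interior hx hx_neg (by norm_num : (0 : ℝ) ≤ 1 / 2)
    (by norm_num : (0 : ℝ) ≤ 1 / 2) (by norm_num)

theorem gauge_le_iff_mem_smul (hcomp : IsCompact K) (hconv : Convex ℝ K) (h0 : K ∈ nhds (0 : E))
    {ρ : ℝ} (hρ : 0 ≤ ρ) {y : E} : gauge K y ≤ ρ ↔ y ∈ ρ • K := by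
  refine ⟨fun hy => ?_, gauge_le_of_mem hρ⟩
  obtain rfl | hρ := hρ.eq_or_lt
  · have hy0 : y = 0 := (gauge_eq_zero (absorbent_nhds_zero h0) (hcomp.isVonNBounded ℝ)).1
      (hy.antisymm (gauge_nonneg y))
    rw [hy0, zero_smul_set ⟨0, mem_of_mem_nhds h0⟩]
    exact mem_zero.2 rfl
  · have h1 : gauge K (ρ⁻¹ • y) ≤ 1 := by
      rw [gauge_smul_of_nonneg (inv_nonneg.2 hρ.le), smul_eq_mul]
      exact inv_mul_le_one_of_le₀ hy hρ.le
    rw [gauge_le_one_iff_mem_closure hconv h0, hcomp.isClosed.closure_eq] at h1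
    exact (mem_smul_set_iff_inv_smul_mem₀ hρ.ne' _ _).2 h1

theorem singleton_add_smul_subset_iInter {ι : Type*} (hcomp : IsCompact K) (hconv : Convex ℝ K)
    (h0 : K ∈ nhds (0 : E)) {q : ι → E} {c : E} {ρ r : ℝ} (hρ : 0 ≤ ρ) (hρr : ρ ≤ r)
    (hc : ∀ i, gauge K (c - q i) ≤ ρ) : {c} + (r - ρ) • K ⊆ ⋂ i, ({q i} + r • K) := by
  intro x hx
  rw [mem_singleton_add_iff, ← gauge_le_iff_mem_smul hcomp hconv h0 (sub_nonneg.2 hρr)] at hx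
  refine mem_iInter.2 fun i => ?_
  rw [mem_singleton_add_iff, ← gauge_le_iff_mem_smul hcomp hconv h0 (hρ.trans hρr)]
  calc gauge K (x - q i) = gauge K ((x - c) + (c - q i)) := by rw [sub_add_sub_cancel]
    _ ≤ gauge K (x - c) + gauge K (c - q i) :=
      gauge_add_le hconv (absorbent_nhds_zero h0) _ _
    _ ≤ (r - ρ) + ρ := add_le_add hx (hc i)
    _ = r := sub_add_cancel r ρ

end Gauge

theorem gauge_inv_card_smul_sum_sub_le {E ι : Type*} [AddCommGroup E] [Module ℝ E] {s : Set E}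
    (hconv : Convex ℝ s) (habs : Absorbent ℝ s) {q : ι → E} {lam : ℝ}
    (hq : ∀ i j, i ≠ j → gauge s (q i - q j) ≤ lam) {I : Finset ι} {i : ι} (hi : i ∈ I) :
    gauge s ((I.card : ℝ)⁻¹ • ∑ j ∈ I, q j - q i) ≤ (1 - (I.card : ℝ)⁻¹) * lam := by
  classical
  have hcard : (0 : ℝ) < I.card := Nat.cast_pos.2 (Finset.card_pos.2 ⟨i, hi⟩)
  have hcentre : (I.card : ℝ)⁻¹ • ∑ j ∈ I, q j - q i = (I.card : ℝ)⁻¹ • ∑ j ∈ I, (q j - q i) := by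
    rw [Finset.sum_sub_distrib, smul_sub, Finset.sum_const, ← Nat.cast_smul_eq_nsmul ℝ, smul_smul,
      inv_mul_cancel₀ hcard.ne', one_smul]
  have hsum : ∑ j ∈ I, gauge s (q j - q i) ≤ ((I.card : ℝ) - 1) * lam :=
    calc ∑ j ∈ I, gauge s (q j - q i) = ∑ j ∈ I.erase i, gauge s (q j - q i) :=
          (Finset.sum_erase I (by simp [gauge_zero])).symm
      _ ≤ (I.erase i).card • lam :=
          Finset.sum_le_card_nsmul _ _ _ fun j hj => hq j i (Finset.ne_of_mem_erase hj)
      _ = ((I.card : ℝ) - 1) * lam := by rw [nsmul_eq_mul, Finset.cast_card_erase_of_mem hi]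
  calc gauge s ((I.card : ℝ)⁻¹ • ∑ j ∈ I, q j - q i)
      ≤ (I.card : ℝ)⁻¹ * ∑ j ∈ I, gauge s (q j - q i) := by
        rw [hcentre, gauge_smul_of_nonneg (inv_nonneg.2 hcard.le), smul_eq_mul]
        exact mul_le_mul_of_nonneg_left (gauge_sum_le hconv habs _ _) (inv_nonneg.2 hcard.le)
    _ ≤ (I.card : ℝ)⁻¹ * (((I.card : ℝ) - 1) * lam) :=
        mul_le_mul_of_nonneg_left hsum (inv_nonneg.2 hcard.le)
    _ = (1 - (I.card : ℝ)⁻¹) * lam := by field_simp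

theorem one_sub_inv_le_div_add_one {n d : ℝ} (hn : 0 < n) (hnd : n ≤ d + 1) :
    1 - n⁻¹ ≤ d / (d + 1) := by
  rw [show d / (d + 1) = 1 - (d + 1)⁻¹ by field_simp [(hn.trans_le hnd).ne']; ring]
  gcongr

/-- Bohnenblust's theorem: by Helly's theorem it suffices to treat `d + 1` points, and their
centroid lies within `(1 - 1 / (d + 1)) λ` of each of them. -/
theorem exists_forall_gauge_sub_le_finrank_div_mul {E ι : Type*} [NormedAddCommGroup E]
    [NormedSpace ℝ E] [FiniteDimensional ℝ E] {K : Set E} (hcomp : IsCompact K)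
    (hconv : Convex ℝ K) (h0 : K ∈ nhds (0 : E)) {q : ι → E} {lam : ℝ} (hlam : 0 ≤ lam)
    (hq : ∀ i j, i ≠ j → gauge K (q i - q j) ≤ lam) :
    ∃ c, ∀ i, gauge K (c - q i) ≤
      ((Module.finrank ℝ E : ℝ) / (Module.finrank ℝ E + 1)) * lam := by
  set d := Module.finrank ℝ E
  set ρ : ℝ := (d : ℝ) / (d + 1) * lam
  have hball : ∀ i x, x ∈ {q i} + ρ • K ↔ gauge K (x - q i) ≤ ρ := fun i x => by
    rw [mem_singleton_add_iff, gauge_le_iff_mem_smul hcomp hconv h0 (by positivity)]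
  have hsmall : ∀ I : Finset ι, I.card ≤ d + 1 → (⋂ i ∈ I, {q i} + ρ • K).Nonempty := by
    intro I hI
    rcases I.eq_empty_or_nonempty with rfl | hI₀
    · simp
    refine ⟨(I.card : ℝ)⁻¹ • ∑ j ∈ I, q j, mem_iInter₂.2 fun i hi => (hball i _).2 ?_⟩
    calc _ ≤ (1 - (I.card : ℝ)⁻¹) * lam :=
          gauge_inv_card_smul_sum_sub_le hconv (absorbent_nhds_zero h0) hq hi
      _ ≤ ρ := mul_le_mul_of_nonneg_right (one_sub_inv_le_div_add_one
          (Nat.cast_pos.2 hI₀.card_pos) (by exact_mod_cast hI)) hlam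
  obtain ⟨c, hc⟩ := Convex.helly_theorem_compact' (𝕜 := ℝ)
    (fun i => (convex_singleton _).add (hconv.smul ρ))
    (fun i => isCompact_singleton.add (hcomp.smul ρ)) hsmall
  exact ⟨c, fun i => (hball i c).1 (mem_iInter.1 hc i)⟩

theorem addHaar_singleton_add_smul {E : Type*} [NormedAddCommGroup E] [NormedSpace ℝ E]
    [MeasurableSpace E] [BorelSpace E] [FiniteDimensional ℝ E] (μ : Measure E)
    [μ.IsAddHaarMeasure] (c : E) {t : ℝ} (ht : 0 ≤ t) (s : Set E) :
    μ ({c} + t • s) = ENNReal.ofReal (t ^ Module.finrank ℝ E) * μ s := by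
  rw [singleton_add, image_add_left, measure_preimage_add, Measure.addHaar_smul_of_nonneg μ ht]

theorem intersection_volume_lower_bound_Bohnenblust_general
    (d N : ℕ)
    (K : Set (EuclideanSpace ℝ (Fin d)))
    (hKcomp : IsCompact K) (hKconv : Convex ℝ K)
    (hKint : (interior K).Nonempty) (hKsymm : ∀ x ∈ K, -x ∈ K)
    (r lam : ℝ) (hlam : 0 < lam)
    (hr : ((d : ℝ) / ((d : ℝ) + 1)) * lam < r)
    (q : Fin N → EuclideanSpace ℝ (Fin d))
    (hQ : ∀ i j, i ≠ j → gauge K (q i - q j) ≤ lam) :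
    ENNReal.ofReal ((r - ((d : ℝ) / ((d : ℝ) + 1)) * lam) ^ d) * volume K ≤
      volume (⋂ i, ({q i} + r • K)) := by
  have h0 : K ∈ nhds 0 :=
    mem_interior_iff_mem_nhds.1 (hKconv.zero_mem_interior_of_neg_mem hKsymm hKint)
  obtain ⟨c, hc⟩ := exists_forall_gauge_sub_le_finrank_div_mul hKcomp hKconv h0 hlam.le hQ
  rw [finrank_euclideanSpace_fin] at hc
  calc ENNReal.ofReal ((r - ((d : ℝ) / ((d : ℝ) + 1)) * lam) ^ d) * volume K
      = volume ({c} + (r - ((d : ℝ) / ((d : ℝ) + 1)) * lam) • K) := by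
        rw [addHaar_singleton_add_smul volume c (sub_nonneg.2 hr.le), finrank_euclideanSpace_fin]
    _ ≤ volume (⋂ i, ({q i} + r • K)) :=
        measure_mono (singleton_add_smul_subset_iInter hKcomp hKconv h0 (by positivity) hr.le hc)

/-- If all pairwise `K`-distances in `Q` are at most `λ` and
`(d/(d+1))·λ < r`, then (via Bohnenblust's theorem)
`V(Q_K^r) ≥ (r − (d/(d+1))·λ)^d · V(K)`. -/
theorem intersection_volume_lower_bound_Bohnenblust
    (d N : ℕ) (hd : 1 < d)
    (K : Set (EuclideanSpace ℝ (Fin d)))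
    (hKcomp : IsCompact K) (hKconv : Convex ℝ K)
    (hKint : (interior K).Nonempty) (hKsymm : ∀ x ∈ K, -x ∈ K)
    (r lam : ℝ) (hlam : 0 < lam) (hr0 : 0 < r)
    (hr : ((d : ℝ) / ((d : ℝ) + 1)) * lam < r)
    (q : Fin N → EuclideanSpace ℝ (Fin d))
    (hQ : ∀ i j, i ≠ j → gauge K (q i - q j) ≤ lam) :
    ENNReal.ofReal ((r - ((d : ℝ) / ((d : ℝ) + 1)) * lam) ^ d) * volume K ≤
      volume (⋂ i, ({q i} + r • K)) :=
  intersection_volume_lower_bound_Bohnenblust_general d N K hKcomp hKconv hKint hKsymm r lam hlam hr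
    q hQ
end

section
/- Let P = {p_1,...,p_N} ⊂ E^d with |p_i − p_j| ≥ λ > 0 for all i < j, where d ≥ d_0 (a large universal constant) and N ≥ 2.359^d. Then the Euclidean circumradius of P satisfies cr(P) > 0.7865·λ > sqrt(2d/(d+1))·(λ/2). -/
/-!
Blichfeldt's method, used here in place of the Kabatiansky–Levenshtein bound. Around each point
put the parabolic bump `y ↦ max 0 (λ²/2 - |y - pᵢ|²)`. These bumps sum to at most `λ²/2`
everywhere: if `k` of them are positive at `y`, those `k` centres are `λ`-separated, so their
moment of inertia about `y` is at least `(k - 1) λ²/2`. Integrating over the ball of radius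
`ρ + λ/√2` about a centre of a ball of radius `ρ` containing the points gives
`N (λ²/2 - r²) r^d ≤ (λ²/2) (ρ + λ/√2)^d` for every `r ≤ λ/√2`. With `r = 0.705 λ` and
`N ≥ 2.359^d` this forces `ρ ≥ 0.79 λ` for large `d`, because `2.359 · 0.705 > 1.1105 · 1.4972`.
-/

open MeasureTheory Set

open Finset in
theorem sum_sum_norm_sub_sq {ι E : Type*} [NormedAddCommGroup E] [InnerProductSpace ℝ E]
    (s : Finset ι) (a : ι → E) :
    ∑ i ∈ s, ∑ j ∈ s, ‖a i - a j‖ ^ 2 = 2 * #s * ∑ i ∈ s, ‖a i‖ ^ 2 - 2 * ‖∑ i ∈ s, a i‖ ^ 2 := by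
  have hinner : ∑ i ∈ s, ∑ j ∈ s, inner ℝ (a i) (a j) = ‖∑ i ∈ s, a i‖ ^ 2 := by
    simp_rw [← real_inner_self_eq_norm_sq, sum_inner, inner_sum]
  simp_rw [norm_sub_sq_real, sum_add_distrib, sum_sub_distrib, sum_const, ← mul_sum, hinner,
    nsmul_eq_mul, ← mul_sum]
  ring

open Finset in
theorem card_sub_one_mul_sq_le_sum_norm_sq {ι E : Type*} [NormedAddCommGroup E]
    [InnerProductSpace ℝ E] {lam : ℝ} (hlam : 0 ≤ lam) (s : Finset ι) (a : ι → E)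
    (ha : Pairwise fun i j => lam ≤ ‖a i - a j‖) :
    (#s - 1) * lam ^ 2 ≤ 2 * ∑ i ∈ s, ‖a i‖ ^ 2 := by
  classical
  have hrow : ∀ i ∈ s, (#s - 1) * lam ^ 2 ≤ ∑ j ∈ s, ‖a i - a j‖ ^ 2 := by
    intro i hi
    rw [← add_sum_erase s _ hi, sub_self, norm_zero, zero_pow two_ne_zero, zero_add]
    have hcard : (#(s.erase i) : ℝ) = #s - 1 := by
      rw [← card_erase_add_one hi, Nat.cast_add_one, add_sub_cancel_right]
    rw [← hcard, ← nsmul_eq_mul]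
    refine card_nsmul_le_sum _ _ _ fun j hj => ?_
    exact pow_le_pow_left₀ hlam (ha (ne_of_mem_erase hj).symm) 2
  have hsum := (card_nsmul_le_sum s _ _ hrow).trans_eq (sum_sum_norm_sub_sq s a)
  rw [nsmul_eq_mul] at hsum
  rcases s.eq_empty_or_nonempty with rfl | hne
  · simpa using sq_nonneg lam
  · have hpos : (0 : ℝ) < #s := by exact_mod_cast hne.card_pos
    nlinarith [sq_nonneg ‖∑ i ∈ s, a i‖]

noncomputable def blichfeldtBump {E : Type*} [PseudoMetricSpace E] (lam : ℝ) (c y : E) : ℝ :=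
  max 0 (lam ^ 2 / 2 - dist y c ^ 2)

section Bump

variable {E : Type*} [PseudoMetricSpace E] {lam : ℝ}

theorem blichfeldtBump_nonneg (c y : E) : 0 ≤ blichfeldtBump lam c y := le_max_left _ _

theorem blichfeldtBump_eq_zero {c y : E} (h : lam ^ 2 ≤ 2 * dist y c ^ 2) :
    blichfeldtBump lam c y = 0 :=
  max_eq_left (by linarith)

theorem sub_sq_le_blichfeldtBump {c y : E} {r : ℝ} (hy : y ∈ Metric.closedBall c r) :
    lam ^ 2 / 2 - r ^ 2 ≤ blichfeldtBump lam c y := by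
  have : dist y c ^ 2 ≤ r ^ 2 := pow_le_pow_left₀ dist_nonneg hy 2
  exact (by linarith : lam ^ 2 / 2 - r ^ 2 ≤ lam ^ 2 / 2 - dist y c ^ 2).trans (le_max_right _ _)

theorem continuous_blichfeldtBump (c : E) : Continuous (blichfeldtBump lam c) := by
  unfold blichfeldtBump
  fun_prop

end Bump

open Finset in
theorem sum_blichfeldtBump_le {ι E : Type*} [Fintype ι] [NormedAddCommGroup E]
    [InnerProductSpace ℝ E] {lam : ℝ} (hlam : 0 ≤ lam) (p : ι → E)
    (hp : Pairwise fun i j => lam ≤ dist (p i) (p j)) (y : E) :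
    ∑ i, blichfeldtBump lam (p i) y ≤ lam ^ 2 / 2 := by
  classical
  set K := univ.filter fun i => 0 ≤ lam ^ 2 / 2 - dist y (p i) ^ 2
  have hsum : ∑ i, blichfeldtBump lam (p i) y = #K * (lam ^ 2 / 2) - ∑ i ∈ K, ‖p i - y‖ ^ 2 := by
    simp_rw [blichfeldtBump, max_def, K, ← sum_filter, sum_sub_distrib, sum_const, nsmul_eq_mul,
      dist_comm y, dist_eq_norm]
  have hK := card_sub_one_mul_sq_le_sum_norm_sq hlam K (fun i => p i - y)
    fun i j hij => by simpa [sub_sub_sub_cancel_right, dist_eq_norm] using hp hij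
  linarith

theorem lintegral_sum_blichfeldtBump_le {ι E : Type*} [Fintype ι] [NormedAddCommGroup E]
    [InnerProductSpace ℝ E] [MeasurableSpace E] [OpensMeasurableSpace E] (μ : Measure E)
    {lam : ℝ} (hlam : 0 ≤ lam) {s ρ : ℝ} (hs : 0 ≤ s)
    (hlam_s : lam ^ 2 ≤ 2 * s ^ 2) (p : ι → E) (hp : Pairwise fun i j => lam ≤ dist (p i) (p j))
    {x : E} (hx : ∀ i, p i ∈ Metric.closedBall x ρ) :
    ∫⁻ y, ∑ i, ENNReal.ofReal (blichfeldtBump lam (p i) y) ∂μ ≤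
      ENNReal.ofReal (lam ^ 2 / 2) * μ (Metric.closedBall x (ρ + s)) := by
  rw [← lintegral_indicator_const Metric.isClosed_closedBall.measurableSet]
  refine lintegral_mono fun y => ?_
  by_cases hy : y ∈ Metric.closedBall x (ρ + s)
  · rw [indicator_of_mem hy, ← ENNReal.ofReal_sum_of_nonneg fun i _ => blichfeldtBump_nonneg _ _]
    exact ENNReal.ofReal_le_ofReal (sum_blichfeldtBump_le hlam p hp y)
  · rw [indicator_of_notMem hy, nonpos_iff_eq_zero, Finset.sum_eq_zero_iff]
    intro i _
    have hfar : s < dist y (p i) := by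
      have := dist_triangle y (p i) x
      have := Metric.mem_closedBall.mp (hx i)
      rw [Metric.mem_closedBall, not_le] at hy
      linarith
    rw [blichfeldtBump_eq_zero (by nlinarith), ENNReal.ofReal_zero]

theorem lintegral_blichfeldtBump_ge {E : Type*} [PseudoMetricSpace E] [MeasurableSpace E]
    [OpensMeasurableSpace E] (μ : Measure E) {lam r : ℝ} (c : E) :
    ENNReal.ofReal (lam ^ 2 / 2 - r ^ 2) * μ (Metric.closedBall c r) ≤
      ∫⁻ y, ENNReal.ofReal (blichfeldtBump lam c y) ∂μ := by
  rw [← lintegral_indicator_const Metric.isClosed_closedBall.measurableSet]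
  refine lintegral_mono fun y => ?_
  by_cases hy : y ∈ Metric.closedBall c r
  · rw [indicator_of_mem hy]
    exact ENNReal.ofReal_le_ofReal (sub_sq_le_blichfeldtBump hy)
  · rw [indicator_of_notMem hy]
    exact zero_le

theorem card_mul_pow_le_of_pairwise_le_dist {ι E : Type*} [Fintype ι] [NormedAddCommGroup E]
    [InnerProductSpace ℝ E] [FiniteDimensional ℝ E] [MeasurableSpace E] [BorelSpace E]
    (μ : Measure E) [μ.IsAddHaarMeasure] {lam : ℝ} (hlam : 0 ≤ lam) {r s ρ : ℝ} (hr : 0 ≤ r)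
    (hr_lam : 2 * r ^ 2 ≤ lam ^ 2) (hs : 0 ≤ s) (hlam_s : lam ^ 2 ≤ 2 * s ^ 2) (hρ : 0 ≤ ρ)
    (p : ι → E) (hp : Pairwise fun i j => lam ≤ dist (p i) (p j)) {x : E}
    (hx : ∀ i, p i ∈ Metric.closedBall x ρ) :
    Fintype.card ι * (lam ^ 2 / 2 - r ^ 2) * r ^ Module.finrank ℝ E ≤
      lam ^ 2 / 2 * (ρ + s) ^ Module.finrank ℝ E := by
  set d := Module.finrank ℝ E
  have hgap : 0 ≤ lam ^ 2 / 2 - r ^ 2 := by linarith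
  have hball₀ : μ (Metric.ball 0 1) ≠ 0 := (Metric.measure_ball_pos μ _ one_pos).ne'
  have hball_top : μ (Metric.ball 0 1) ≠ ⊤ := measure_ball_lt_top.ne
  have key : ENNReal.ofReal (Fintype.card ι * (lam ^ 2 / 2 - r ^ 2) * r ^ d) * μ (Metric.ball 0 1)
      ≤ ENNReal.ofReal (lam ^ 2 / 2 * (ρ + s) ^ d) * μ (Metric.ball 0 1) :=
    calc ENNReal.ofReal (Fintype.card ι * (lam ^ 2 / 2 - r ^ 2) * r ^ d) * μ (Metric.ball 0 1)
        = ∑ i, ENNReal.ofReal (lam ^ 2 / 2 - r ^ 2) * μ (Metric.closedBall (p i) r) := by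
          simp_rw [Measure.addHaar_closedBall μ _ hr]
          rw [Finset.sum_const, Finset.card_univ, nsmul_eq_mul,
            ENNReal.ofReal_mul (by positivity), ENNReal.ofReal_mul (by positivity),
            ENNReal.ofReal_natCast]
          ring
      _ ≤ ∑ i, ∫⁻ y, ENNReal.ofReal (blichfeldtBump lam (p i) y) ∂μ :=
          Finset.sum_le_sum fun i _ => lintegral_blichfeldtBump_ge μ (p i)
      _ = ∫⁻ y, ∑ i, ENNReal.ofReal (blichfeldtBump lam (p i) y) ∂μ :=
          (lintegral_finsetSum _ fun i _ =>
            (continuous_blichfeldtBump (p i)).measurable.ennreal_ofReal).symm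
      _ ≤ ENNReal.ofReal (lam ^ 2 / 2) * μ (Metric.closedBall x (ρ + s)) :=
          lintegral_sum_blichfeldtBump_le μ hlam hs hlam_s p hp hx
      _ = ENNReal.ofReal (lam ^ 2 / 2 * (ρ + s) ^ d) * μ (Metric.ball 0 1) := by
          rw [Measure.addHaar_closedBall μ _ (by positivity), ENNReal.ofReal_mul (by positivity),
            mul_assoc]
  rwa [ENNReal.mul_le_mul_iff_left hball₀ hball_top,
    ENNReal.ofReal_le_ofReal_iff (by positivity)] at key

theorem radius_ge_of_pairwise_le_dist {ι E : Type*} [Fintype ι] [NormedAddCommGroup E]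
    [InnerProductSpace ℝ E] [FiniteDimensional ℝ E] (hdim : 2000 ≤ Module.finrank ℝ E)
    (hcard : (2.359 : ℝ) ^ Module.finrank ℝ E ≤ Fintype.card ι) {lam : ℝ} (hlam : 0 < lam)
    (p : ι → E) (hp : Pairwise fun i j => lam ≤ dist (p i) (p j)) {x : E} {ρ : ℝ}
    (hx : ∀ i, p i ∈ Metric.closedBall x ρ) :
    0.79 * lam ≤ ρ := by
  set d := Module.finrank ℝ E
  have hnumerics : (1.4972 : ℝ) ^ d < 0.00595 * (2.359 * 0.705) ^ d := by
    have hbernoulli : (1 : ℝ) + d * 0.1105 ≤ 1.1105 ^ d := by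
      simpa [show (1 : ℝ) + 0.1105 = 1.1105 by norm_num] using
        one_add_mul_le_pow (by norm_num : (-2 : ℝ) ≤ 0.1105) d
    have hd : (2000 : ℝ) ≤ d := by exact_mod_cast hdim
    calc (1.4972 : ℝ) ^ d < 0.00595 * (1.1105 ^ d * 1.4972 ^ d) := by
          have : (0 : ℝ) < 1.4972 ^ d := by positivity
          nlinarith
      _ = 0.00595 * (1.1105 * 1.4972) ^ d := by rw [mul_pow]
      _ ≤ 0.00595 * (2.359 * 0.705) ^ d := by gcongr 0.00595 * ?_ ^ d; norm_num
  have hne : Nonempty ι := by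
    rw [← Fintype.card_pos_iff, ← Nat.cast_pos (α := ℝ)]
    exact (pow_pos (by norm_num) d).trans_le hcard
  have hρ : 0 ≤ ρ := dist_nonneg.trans (hx (Classical.arbitrary ι))
  by_contra! hsmall
  let _ : MeasurableSpace E := borel E
  have _ : BorelSpace E := ⟨rfl⟩
  have hpack := card_mul_pow_le_of_pairwise_le_dist Measure.addHaar hlam.le
    (r := 0.705 * lam) (s := 0.7072 * lam) (by positivity) (by nlinarith) (by positivity)
    (by nlinarith) hρ p hp hx
  have hgrow : (ρ + 0.7072 * lam) ^ d < (1.4972 * lam) ^ d :=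
    pow_lt_pow_left₀ (by linarith) (by positivity) (by omega)
  have hcontra : (2.359 : ℝ) ^ d * (0.002975 * lam ^ 2) * (0.705 * lam) ^ d <
      lam ^ 2 / 2 * (1.4972 * lam) ^ d :=
    calc (2.359 : ℝ) ^ d * (0.002975 * lam ^ 2) * (0.705 * lam) ^ d
        ≤ Fintype.card ι * (lam ^ 2 / 2 - (0.705 * lam) ^ 2) * (0.705 * lam) ^ d := by
          gcongr
          linarith
      _ ≤ lam ^ 2 / 2 * (ρ + 0.7072 * lam) ^ d := hpack
      _ < lam ^ 2 / 2 * (1.4972 * lam) ^ d := by gcongr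
  rw [mul_pow, mul_pow] at hcontra
  have hlam_pow : 0 < lam ^ 2 * lam ^ d := by positivity
  nlinarith [mul_pow (2.359 : ℝ) 0.705 d]

/-- There is a (large) universal constant `d₀` such that for all `d ≥ d₀`,
if `N ≥ 2.359^d` points in Euclidean `d`-space have pairwise distances at least `λ > 0`,
then their circumradius satisfies `√(2d/(d+1))·(λ/2) < 0.7865·λ < cr(P)`. -/
theorem circumradius_lower_bound_euclidean :
    ∃ d₀ : ℕ, ∀ d : ℕ, d₀ ≤ d → ∀ N : ℕ, (2.359 : ℝ) ^ d ≤ (N : ℝ) →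
    ∀ lam : ℝ, 0 < lam →
    ∀ p : Fin N → EuclideanSpace ℝ (Fin d),
    (∀ i j, i ≠ j → lam ≤ dist (p i) (p j)) →
    Real.sqrt (2 * (d : ℝ) / ((d : ℝ) + 1)) * (lam / 2) < 0.7865 * lam ∧
    0.7865 * lam <
      sInf {ρ : ℝ | ∃ x : EuclideanSpace ℝ (Fin d), ∀ i, p i ∈ Metric.closedBall x ρ} := by
  refine ⟨2000, fun d hd N hN lam hlam p hp => ⟨?_, ?_⟩⟩
  · have hsqrt : Real.sqrt (2 * (d : ℝ) / ((d : ℝ) + 1)) < 1.573 := by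
      rw [Real.sqrt_lt' (by norm_num), div_lt_iff₀ (by positivity)]
      nlinarith
    nlinarith
  · obtain ⟨ρ, hρ⟩ := (Metric.isBounded_iff_subset_closedBall 0).mp (finite_range p).isBounded
    have hdim := finrank_euclideanSpace_fin (𝕜 := ℝ) (n := d)
    refine lt_of_lt_of_le (by linarith : 0.7865 * lam < 0.79 * lam)
      (le_csInf ⟨ρ, 0, fun i => hρ (mem_range_self i)⟩ ?_)
    rintro ρ ⟨x, hx⟩
    exact radius_ge_of_pairwise_le_dist (by rwa [hdim]) (by simpa [hdim] using hN) hlam p hp hx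
end

section
/- Let d ≥ 2, λ > 0, and r > sqrt(2d/(d+1))·(λ/2), and let Q = {q_1,...,q_N} ⊂ E^d satisfy |q_i − q_j| ≤ λ for all i < j. Then V_d(∩_{i=1}^N B^d[q_i, r]) ≥ V_d(B^d[o, sqrt(r^2 − ((d−1)/(d+1))(λ/2)^2) − λ/2]). -/
/-!
By Jung's theorem the points lie in a ball `B[c, ρ]` with `ρ = √(2d/(d+1)) · λ/2 < r`. For a unit
vector `u` let `h u = maxᵢ ⟪qᵢ - c, u⟫`. Then `c + t • u` lies in every ball `B[qᵢ, r]` as soon as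
`0 < t < F (h (-u))`, where `F x = √(r² - ρ² + x²) - x`, so the intersection contains the star
body with radial function `u ↦ F (h (-u))`. In polar coordinates its volume is
`∫ F (h (-u)) ^ d / d dσ(u)`. Since `h u + h (-u) ≤ λ` and `F` is decreasing and convex,
`F (h (-u)) ^ d + F (h u) ^ d ≥ 2 F (λ/2) ^ d`; integrating over the sphere, the star body is at
least as large as the ball of radius `F (λ/2)`, which is the radius in the statement.
-/

open MeasureTheory Set Metric Filter Topology
open scoped RealInnerProductSpace Pointwise

/-- Schramm's function `F(μ, ρ, x) = √(μ² - ρ² + x²) - x`, written with `a = μ² - ρ²`. -/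
noncomputable def schrammRadius (a x : ℝ) : ℝ := √(a + x ^ 2) - x

namespace schrammRadius

variable {a : ℝ}

theorem pos (ha : 0 < a) (x : ℝ) : 0 < schrammRadius a x := by
  have : |x| < √(a + x ^ 2) := (Real.lt_sqrt (abs_nonneg x)).2 (by rw [sq_abs]; linarith)
  exact sub_pos.2 ((le_abs_self x).trans_lt this)

theorem antitone (ha : 0 ≤ a) : Antitone (schrammRadius a) := by
  intro x y hxy
  have hx : x ≤ √(a + x ^ 2) := Real.le_sqrt_of_sq_le (by nlinarith)
  have : √(a + y ^ 2) ≤ √(a + x ^ 2) + (y - x) := by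
    rw [Real.sqrt_le_iff]
    refine ⟨by linarith [Real.sqrt_nonneg (a + x ^ 2)], ?_⟩
    nlinarith [Real.sq_sqrt (show 0 ≤ a + x ^ 2 by positivity)]
  unfold schrammRadius
  linarith

theorem midpoint_le (ha : 0 ≤ a) (x y : ℝ) :
    schrammRadius a ((x + y) / 2) ≤ (schrammRadius a x + schrammRadius a y) / 2 := by
  have hx := Real.sq_sqrt (show 0 ≤ a + x ^ 2 by positivity)
  have hy := Real.sq_sqrt (show 0 ≤ a + y ^ 2 by positivity)
  -- Cauchy–Schwarz for the vectors `(√a, x)` and `(√a, y)`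
  have hcs : a + x * y ≤ √(a + x ^ 2) * √(a + y ^ 2) := by
    rw [← Real.sqrt_mul (by positivity)]
    exact Real.le_sqrt_of_sq_le (by nlinarith [sq_nonneg (x - y)])
  have : √(a + ((x + y) / 2) ^ 2) ≤ (√(a + x ^ 2) + √(a + y ^ 2)) / 2 := by
    rw [Real.sqrt_le_iff]
    exact ⟨by positivity, by nlinarith⟩
  unfold schrammRadius
  linarith

theorem two_mul_pow_le (ha : 0 < a) {x y m : ℝ} (hxy : x + y ≤ 2 * m) (n : ℕ) :
    2 * schrammRadius a m ^ n ≤ schrammRadius a x ^ n + schrammRadius a y ^ n := by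
  have hm : schrammRadius a m ≤ (schrammRadius a x + schrammRadius a y) / 2 :=
    (antitone ha.le (by linarith : (x + y) / 2 ≤ m)).trans (midpoint_le ha.le x y)
  have hpow : ((schrammRadius a x + schrammRadius a y) / 2) ^ n
      ≤ (schrammRadius a x ^ n + schrammRadius a y ^ n) / 2 := by
    have := (convexOn_pow n).2 (pos ha x).le (pos ha y).le (by norm_num : (0 : ℝ) ≤ 1 / 2)
      (by norm_num : (0 : ℝ) ≤ 1 / 2) (by norm_num)
    simp only [smul_eq_mul] at this
    calc _ = (1 / 2 * schrammRadius a x + 1 / 2 * schrammRadius a y) ^ n := by ring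
      _ ≤ _ := this
      _ = _ := by ring
  linarith [pow_le_pow_left₀ (pos ha m).le hm n]

end schrammRadius

section InnerProductSpace

variable {E : Type*} [NormedAddCommGroup E] [InnerProductSpace ℝ E]

theorem dist_add_smul_sq (c v x : E) (t : ℝ) :
    dist (c + t • v) x ^ 2 = dist c x ^ 2 - 2 * t * ⟪v, x - c⟫ + t ^ 2 * ‖v‖ ^ 2 := by
  rw [dist_eq_norm, dist_eq_norm, add_sub_right_comm, norm_add_sq_real, real_inner_smul_right,
    norm_smul, mul_pow, Real.norm_eq_abs, sq_abs, real_inner_comm, ← neg_sub x c, inner_neg_right]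
  ring

theorem add_smul_mem_closedBall_of_lt_schrammRadius {x c u : E} {ρ r t : ℝ} (hu : ‖u‖ = 1)
    (hx : dist x c ≤ ρ) (hρr : ρ ≤ r) (ht0 : 0 ≤ t)
    (ht : t < schrammRadius (r ^ 2 - ρ ^ 2) ⟪x - c, -u⟫) :
    c + t • u ∈ closedBall x r := by
  set s := ⟪x - c, -u⟫
  have hρ : 0 ≤ ρ := dist_nonneg.trans hx
  have hs : |s| ≤ √(r ^ 2 - ρ ^ 2 + s ^ 2) := Real.abs_le_sqrt (by nlinarith)
  have hts : (t + s) ^ 2 ≤ r ^ 2 - ρ ^ 2 + s ^ 2 := by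
    have h := sq_le_sq' (a := t + s) (b := √(r ^ 2 - ρ ^ 2 + s ^ 2))
      (by linarith [neg_abs_le s]) (by unfold schrammRadius at ht; linarith)
    rwa [Real.sq_sqrt (by nlinarith)] at h
  have hxc : dist c x ^ 2 ≤ ρ ^ 2 := pow_le_pow_left₀ dist_nonneg (dist_comm x c ▸ hx) 2
  have hsu : ⟪u, x - c⟫ = -s := by simp only [s, inner_neg_right, neg_neg, real_inner_comm]
  rw [mem_closedBall, ← pow_le_pow_iff_left₀ dist_nonneg (hρ.trans hρr) two_ne_zero,
    dist_add_smul_sq, hu, hsu]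
  nlinarith

theorem exists_forall_inner_sub_pos_of_notMem {K : Set E} {x : E} (hK : Convex ℝ K)
    (hKc : IsComplete K) (hx : x ∉ K) : ∃ v : E, ∀ y ∈ K, 0 < ⟪v, y - x⟫ := by
  rcases K.eq_empty_or_nonempty with rfl | hne
  · exact ⟨0, by simp⟩
  obtain ⟨v, hvK, hv⟩ := exists_norm_eq_iInf_of_complete_convex hne hKc hK x
  have hproj := (norm_eq_iInf_iff_real_inner_le_zero hK hvK).1 hv
  have hvx : 0 < ‖v - x‖ := norm_pos_iff.2 (sub_ne_zero.2 (ne_of_mem_of_not_mem hvK hx))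
  refine ⟨v - x, fun y hy ↦ ?_⟩
  have hsplit : ⟪v - x, y - x⟫ = -⟪x - v, y - v⟫ + ‖v - x‖ ^ 2 := by
    rw [← real_inner_self_eq_norm_sq, ← inner_neg_left, neg_sub, ← inner_add_right]
    congr 1
    abel
  linarith [hproj y hy, pow_pos hvx 2]

variable {ι : Type*} [Fintype ι] {z : ι → E} {w : ι → ℝ} {c : E} {ρ : ℝ}

theorem sum_mul_dist_sq_eq_two_mul_sq (hw1 : ∑ i, w i = 1) (hc : ∑ i, w i • z i = c)
    (hz : ∀ i, dist (z i) c = ρ) (j : ι) :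
    ∑ i, w i * dist (z i) (z j) ^ 2 = 2 * ρ ^ 2 := by
  have hcentered : ∑ i, w i • (z i - c) = 0 := by
    simp only [smul_sub, Finset.sum_sub_distrib, hc, ← Finset.sum_smul, hw1, one_smul, sub_self]
  calc ∑ i, w i * dist (z i) (z j) ^ 2
      = ∑ i, (w i * dist (z i) c ^ 2 - 2 * ⟪w i • (z i - c), z j - c⟫
          + w i * dist (z j) c ^ 2) := by
        refine Finset.sum_congr rfl fun i _ ↦ ?_
        rw [dist_eq_norm, dist_eq_norm, dist_eq_norm,
          show z i - z j = (z i - c) - (z j - c) by abel, norm_sub_sq_real, real_inner_smul_left]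
        ring
    _ = 2 * ρ ^ 2 - 2 * ⟪∑ i, w i • (z i - c), z j - c⟫ := by
        simp only [Finset.sum_add_distrib, Finset.sum_sub_distrib, ← Finset.sum_mul,
          ← Finset.mul_sum, sum_inner, hz, hw1]
        ring
    _ = 2 * ρ ^ 2 := by rw [hcentered, inner_zero_left, mul_zero, sub_zero]

theorem two_mul_card_mul_sq_le {lam : ℝ} (hw0 : ∀ i, 0 ≤ w i) (hw1 : ∑ i, w i = 1)
    (hc : ∑ i, w i • z i = c) (hz : ∀ i, dist (z i) c = ρ)
    (hzz : ∀ i j, dist (z i) (z j) ≤ lam) :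
    2 * Fintype.card ι * ρ ^ 2 ≤ (Fintype.card ι - 1) * lam ^ 2 := by
  classical
  have hrow : ∀ j, 2 * ρ ^ 2 ≤ (1 - w j) * lam ^ 2 := fun j ↦
    calc 2 * ρ ^ 2 = ∑ i, w i * dist (z i) (z j) ^ 2 :=
          (sum_mul_dist_sq_eq_two_mul_sq hw1 hc hz j).symm
      _ = ∑ i ∈ Finset.univ.erase j, w i * dist (z i) (z j) ^ 2 :=
          (Finset.sum_erase _ (by simp)).symm
      _ ≤ ∑ i ∈ Finset.univ.erase j, w i * lam ^ 2 := Finset.sum_le_sum fun i _ ↦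
          mul_le_mul_of_nonneg_left (pow_le_pow_left₀ dist_nonneg (hzz i j) 2) (hw0 i)
      _ = (1 - w j) * lam ^ 2 := by
          rw [← Finset.sum_mul, Finset.sum_erase_eq_sub (Finset.mem_univ j), hw1]
  calc 2 * Fintype.card ι * ρ ^ 2 = ∑ j : ι, 2 * ρ ^ 2 := by simp; ring
    _ ≤ ∑ j, (1 - w j) * lam ^ 2 := Finset.sum_le_sum fun j _ ↦ hrow j
    _ = (Fintype.card ι - 1) * lam ^ 2 := by
        rw [← Finset.sum_mul, Finset.sum_sub_distrib, hw1]
        simp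

end InnerProductSpace

section FiniteFamily

variable {ι E : Type*} [Fintype ι] [Nonempty ι]

noncomputable def farthestDist [PseudoMetricSpace E] (p : ι → E) (x : E) : ℝ :=
  Finset.univ.sup' Finset.univ_nonempty fun i ↦ dist x (p i)

theorem dist_le_farthestDist [PseudoMetricSpace E] (p : ι → E) (x : E) (i : ι) :
    dist x (p i) ≤ farthestDist p x :=
  Finset.le_sup' (fun i ↦ dist x (p i)) (Finset.mem_univ i)

theorem exists_forall_farthestDist_le [MetricSpace E] [ProperSpace E] (p : ι → E) :
    ∃ c, ∀ x, farthestDist p c ≤ farthestDist p x := by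
  inhabit ι
  have : Nonempty E := ⟨p default⟩
  refine Continuous.exists_forall_le ?_ ?_
  · exact Continuous.finset_sup'_apply _ fun i _ ↦ continuous_id.dist continuous_const
  · exact tendsto_atTop_mono (fun x ↦ dist_le_farthestDist p x default)
      (tendsto_dist_right_cocompact_atTop (p default))

variable [NormedAddCommGroup E] [InnerProductSpace ℝ E]

theorem mem_convexHull_farthest_of_forall_farthestDist_le {p : ι → E} {c : E}
    (hc : ∀ x, farthestDist p c ≤ farthestDist p x) :
    c ∈ convexHull ℝ (p '' {i | dist c (p i) = farthestDist p c}) := by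
  set ρ := farthestDist p c
  by_contra hnot
  have hfin : (p '' {i | dist c (p i) = ρ}).Finite := (toFinite _).image p
  obtain ⟨v, hv⟩ := exists_forall_inner_sub_pos_of_notMem (convex_convexHull ℝ _)
    (hfin.isCompact_convexHull ℝ).isComplete hnot
  have hρ : 0 ≤ ρ := dist_nonneg.trans (dist_le_farthestDist p c (Classical.arbitrary ι))
  -- moving `c` a little in the direction `v` brings it strictly closer to every point
  have hcloser : ∀ i, ∀ᶠ t in 𝓝[>] (0 : ℝ), dist (c + t • v) (p i) < ρ := by
    intro i
    by_cases hi : dist c (p i) = ρ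
    · have hpos : 0 < ⟪v, p i - c⟫ := hv _ (subset_convexHull ℝ _ ⟨i, hi, rfl⟩)
      have hsmall : ∀ᶠ t in 𝓝 (0 : ℝ), t * ‖v‖ ^ 2 < 2 * ⟪v, p i - c⟫ :=
        (continuous_id.mul continuous_const).continuousAt.eventually_lt continuousAt_const
          (by simpa using hpos)
      filter_upwards [self_mem_nhdsWithin, nhdsWithin_le_nhds hsmall] with t ht0 ht
      rw [← pow_lt_pow_iff_left₀ dist_nonneg hρ two_ne_zero, dist_add_smul_sq, hi]
      nlinarith [mul_pos (mem_Ioi.1 ht0) (sub_pos.2 ht)]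
    · have hlt : dist c (p i) < ρ := (dist_le_farthestDist p c i).lt_of_ne hi
      have hcont : ContinuousAt (fun t : ℝ ↦ dist (c + t • v) (p i)) 0 := by fun_prop
      exact nhdsWithin_le_nhds (hcont.eventually_lt continuousAt_const (by simpa using hlt))
  obtain ⟨t, ht⟩ := (eventually_all.2 hcloser).exists
  exact (hc (c + t • v)).not_gt ((Finset.sup'_lt_iff _).2 fun i _ ↦ ht i)

noncomputable def supportFun (p : ι → E) (v : E) : ℝ :=
  Finset.univ.sup' Finset.univ_nonempty fun i ↦ ⟪p i, v⟫

theorem inner_le_supportFun (p : ι → E) (v : E) (i : ι) : ⟪p i, v⟫ ≤ supportFun p v :=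
  Finset.le_sup' (fun i ↦ ⟪p i, v⟫) (Finset.mem_univ i)

theorem continuous_supportFun (p : ι → E) : Continuous (supportFun p) :=
  Continuous.finset_sup'_apply _ fun _ _ ↦ continuous_const.inner continuous_id

theorem supportFun_neg_add_supportFun_le {p : ι → E} {lam : ℝ}
    (hp : ∀ i j, dist (p i) (p j) ≤ lam) (u : E) :
    supportFun p (-u) + supportFun p u ≤ ‖u‖ * lam := by
  obtain ⟨i, -, hi⟩ := Finset.exists_mem_eq_sup' Finset.univ_nonempty fun i ↦ ⟪p i, -u⟫
  obtain ⟨j, -, hj⟩ := Finset.exists_mem_eq_sup' Finset.univ_nonempty fun i ↦ ⟪p i, u⟫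
  have hji : ⟪p j - p i, u⟫ ≤ ‖u‖ * lam :=
    calc ⟪p j - p i, u⟫ ≤ ‖p j - p i‖ * ‖u‖ := real_inner_le_norm _ _
      _ ≤ ‖u‖ * lam := by
        rw [mul_comm, ← dist_eq_norm]
        exact mul_le_mul_of_nonneg_left (hp j i) (norm_nonneg u)
  rw [supportFun, supportFun, hi, hj, inner_neg_right]
  rw [inner_sub_left] at hji
  linarith

theorem exists_forall_dist_le_jung [FiniteDimensional ℝ E] (p : ι → E) {lam : ℝ}
    (hp : ∀ i j, dist (p i) (p j) ≤ lam) :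
    ∃ c, ∀ i, dist (p i) c ≤
      √(2 * Module.finrank ℝ E / (Module.finrank ℝ E + 1)) * (lam / 2) := by
  obtain ⟨c, hc⟩ := exists_forall_farthestDist_le p
  set ρ := farthestDist p c
  -- Carathéodory: `c` is a convex combination of affinely independent farthest points
  obtain ⟨κ, _, z, w, hzp, hind, hw0, hw1, hwz⟩ :=
    eq_pos_convex_span_of_mem_convexHull (mem_convexHull_farthest_of_forall_farthestDist_le hc)
  have hzc : ∀ k, dist (z k) c = ρ := fun k ↦ by
    obtain ⟨i, hi, hik⟩ := hzp ⟨k, rfl⟩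
    rw [← hik, dist_comm]
    exact hi
  have hzz : ∀ k l, dist (z k) (z l) ≤ lam := fun k l ↦ by
    obtain ⟨i, -, hi⟩ := hzp ⟨k, rfl⟩
    obtain ⟨j, -, hj⟩ := hzp ⟨l, rfl⟩
    rw [← hi, ← hj]
    exact hp i j
  have hkey := two_mul_card_mul_sq_le (fun k ↦ (hw0 k).le) hw1 hwz hzc hzz
  have hcard : (Fintype.card κ : ℝ) ≤ Module.finrank ℝ E + 1 := by
    exact_mod_cast hind.card_le_finrank_succ.trans (Nat.succ_le_succ (Submodule.finrank_le _))
  have hcard_pos : (0 : ℝ) < Fintype.card κ := by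
    have : (Finset.univ : Finset κ).Nonempty :=
      Finset.nonempty_of_sum_ne_zero (by rw [hw1]; exact one_ne_zero)
    exact_mod_cast Finset.card_pos.2 this
  have hlam : 0 ≤ lam := dist_nonneg.trans (hp (Classical.arbitrary ι) (Classical.arbitrary ι))
  have hρ : ρ ≤ √(2 * Module.finrank ℝ E / (Module.finrank ℝ E + 1)) * (lam / 2) := by
    rw [← Real.sqrt_sq (by positivity : 0 ≤ lam / 2), ← Real.sqrt_mul (by positivity)]
    refine Real.le_sqrt_of_sq_le ?_
    rw [div_mul_eq_mul_div, le_div_iff₀ (by positivity)]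
    nlinarith
  exact ⟨c, fun i ↦ (dist_comm (p i) c).trans_le ((dist_le_farthestDist p c i).trans hρ)⟩

end FiniteFamily

section RadialSet

variable {E : Type*} [NormedAddCommGroup E] [NormedSpace ℝ E]

def radialSet (G : sphere (0 : E) 1 → ℝ) : Set E :=
  (fun p : sphere (0 : E) 1 × Ioi (0 : ℝ) ↦ (p.2 : ℝ) • (p.1 : E)) '' {p | (p.2 : ℝ) < G p.1}

theorem mem_radialSet {G : sphere (0 : E) 1 → ℝ} {x : E} :
    x ∈ radialSet G ↔ ∃ u : sphere (0 : E) 1, ∃ t, 0 < t ∧ t < G u ∧ t • (u : E) = x := by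
  constructor
  · rintro ⟨⟨u, t, ht0⟩, htG, rfl⟩
    exact ⟨u, t, ht0, htG, rfl⟩
  · rintro ⟨u, t, ht0, htG, rfl⟩
    exact ⟨(u, ⟨t, ht0⟩), htG, rfl⟩

theorem neg_radialSet (G : sphere (0 : E) 1 → ℝ) : -radialSet G = radialSet (fun u ↦ G (-u)) := by
  ext x
  simp only [Set.mem_neg, mem_radialSet]
  constructor
  · rintro ⟨u, t, ht0, htG, hx⟩
    exact ⟨-u, t, ht0, by rwa [neg_neg], by rw [coe_neg_sphere, smul_neg, hx, neg_neg]⟩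
  · rintro ⟨u, t, ht0, htG, rfl⟩
    exact ⟨-u, t, ht0, htG, by rw [coe_neg_sphere, smul_neg]⟩

theorem radialSet_const {R : ℝ} : radialSet (fun _ : sphere (0 : E) 1 ↦ R) = ball 0 R \ {0} := by
  ext x
  simp only [mem_radialSet, Set.mem_sdiff, mem_ball_zero_iff, mem_singleton_iff]
  constructor
  · rintro ⟨u, t, ht0, htR, rfl⟩
    have hu : ‖(u : E)‖ = 1 := norm_eq_of_mem_sphere u
    refine ⟨by rwa [norm_smul, hu, mul_one, Real.norm_of_nonneg ht0.le], ?_⟩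
    exact smul_ne_zero ht0.ne' (ne_zero_of_mem_unit_sphere u)
  · rintro ⟨hxR, hx0⟩
    have hx : 0 < ‖x‖ := norm_pos_iff.2 hx0
    refine ⟨⟨‖x‖⁻¹ • x, ?_⟩, ‖x‖, hx, hxR, ?_⟩
    · simp [norm_smul, hx.ne']
    · simp [smul_smul, hx.ne']

variable [MeasurableSpace E] [BorelSpace E] [FiniteDimensional ℝ E] (μ : Measure E)
  [μ.IsAddHaarMeasure]

theorem addHaar_radialSet [Nontrivial E] {G : sphere (0 : E) 1 → ℝ} (hG : Measurable G)
    (hG0 : ∀ u, 0 < G u) :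
    μ (radialSet G) = ∫⁻ u, ENNReal.ofReal (G u ^ Module.finrank ℝ E / Module.finrank ℝ E)
      ∂μ.toSphere := by
  set S := {p : sphere (0 : E) 1 × Ioi (0 : ℝ) | (p.2 : ℝ) < G p.1}
  have hS : MeasurableSet S :=
    measurableSet_lt (by fun_prop) (hG.comp measurable_fst)
  have hrad : radialSet G = Subtype.val '' (homeomorphUnitSphereProd E ⁻¹' S) := by
    rw [← Homeomorph.image_symm, image_image]
    rfl
  have hd : 0 < Module.finrank ℝ E := Module.finrank_pos
  rw [hrad, ← comap_subtype_coe_apply (measurableSet_singleton 0).compl,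
    (μ.measurePreserving_homeomorphUnitSphereProd).measure_preimage hS.nullMeasurableSet,
    Measure.prod_apply hS]
  refine lintegral_congr fun u ↦ ?_
  have hslice : Prod.mk u ⁻¹' S = Iio ⟨G u, hG0 u⟩ := rfl
  rw [hslice, Measure.volumeIoiPow_apply_Iio, Nat.sub_add_cancel hd, Nat.cast_pred hd,
    sub_add_cancel]

theorem addHaar_closedBall_le_addHaar_radialSet [Nontrivial E] {G : sphere (0 : E) 1 → ℝ}
    (hG : Measurable G) (hG0 : ∀ u, 0 < G u) {R : ℝ} (hR : 0 < R)
    (hGR : ∀ u, 2 * R ^ Module.finrank ℝ E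
      ≤ G u ^ Module.finrank ℝ E + G (-u) ^ Module.finrank ℝ E) :
    μ (closedBall 0 R) ≤ μ (radialSet G) := by
  set n := Module.finrank ℝ E
  have hball : μ (closedBall 0 R) = μ (radialSet fun _ ↦ R) := by
    rw [radialSet_const, measure_sdiff_null (measure_singleton 0),
      μ.addHaar_closedBall_eq_addHaar_ball]
  have hneg : μ (radialSet fun u ↦ G (-u)) = μ (radialSet G) := by
    rw [← neg_radialSet, Measure.measure_neg]
  have hGneg : Measurable fun u ↦ G (-u) := hG.comp continuous_neg.measurable
  have hpointwise : ∀ u, ENNReal.ofReal (R ^ n / n) + ENNReal.ofReal (R ^ n / n)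
      ≤ ENNReal.ofReal (G u ^ n / n) + ENNReal.ofReal (G (-u) ^ n / n) := fun u ↦ by
    rw [← ENNReal.ofReal_add (by positivity) (by positivity),
      ← ENNReal.ofReal_add (by have := hG0 u; positivity) (by have := hG0 (-u); positivity),
      ← add_div, ← add_div]
    exact ENNReal.ofReal_le_ofReal (div_le_div_of_nonneg_right (by linarith [hGR u]) n.cast_nonneg)
  refine (ENNReal.mul_le_mul_iff_right two_ne_zero ENNReal.ofNat_ne_top).1 ?_
  calc 2 * μ (closedBall 0 R)
      = ∫⁻ _, ENNReal.ofReal (R ^ n / n) + ENNReal.ofReal (R ^ n / n) ∂μ.toSphere := by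
        rw [hball, addHaar_radialSet μ measurable_const fun _ ↦ hR, two_mul,
          lintegral_add_left measurable_const]
    _ ≤ ∫⁻ u, ENNReal.ofReal (G u ^ n / n) + ENNReal.ofReal (G (-u) ^ n / n) ∂μ.toSphere :=
        lintegral_mono hpointwise
    _ = 2 * μ (radialSet G) := by
        rw [lintegral_add_left (by fun_prop), ← addHaar_radialSet μ hG hG0,
          ← addHaar_radialSet μ hGneg fun u ↦ hG0 (-u), hneg, two_mul]

end RadialSet

theorem addHaar_closedBall_schrammRadius_le_addHaar_iInter_closedBall {ι E : Type*} [Fintype ι]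
    [Nonempty ι] [NormedAddCommGroup E] [InnerProductSpace ℝ E] [FiniteDimensional ℝ E]
    [Nontrivial E] [MeasurableSpace E] [BorelSpace E] (μ : Measure E) [μ.IsAddHaarMeasure]
    {p : ι → E} {c : E} {ρ r lam : ℝ} (hpc : ∀ i, dist (p i) c ≤ ρ) (hρr : ρ < r)
    (hp : ∀ i j, dist (p i) (p j) ≤ lam) :
    μ (closedBall 0 (schrammRadius (r ^ 2 - ρ ^ 2) (lam / 2))) ≤ μ (⋂ i, closedBall (p i) r) := by
  set a := r ^ 2 - ρ ^ 2
  have ha : 0 < a := by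
    have := dist_nonneg.trans (hpc (Classical.arbitrary ι))
    nlinarith
  set h := supportFun fun i ↦ p i - c
  set G : sphere (0 : E) 1 → ℝ := fun u ↦ schrammRadius a (h (-u))
  have hG : Measurable G := by
    have := continuous_supportFun fun i ↦ p i - c
    refine Continuous.measurable ?_
    simp only [G, schrammRadius]
    fun_prop
  have hwidth : ∀ u : sphere (0 : E) 1, h (-u) + h u ≤ 2 * (lam / 2) := fun u ↦ by
    have := supportFun_neg_add_supportFun_le (fun i j ↦ (dist_sub_right _ _ c).trans_le (hp i j))
      (u : E)
    rw [norm_eq_of_mem_sphere u, one_mul] at this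
    linarith
  have hsub : c +ᵥ radialSet G ⊆ ⋂ i, closedBall (p i) r := by
    rintro _ ⟨x, hx, rfl⟩
    obtain ⟨u, t, ht0, htG, rfl⟩ := mem_radialSet.1 hx
    refine mem_iInter.2 fun i ↦ add_smul_mem_closedBall_of_lt_schrammRadius
      (norm_eq_of_mem_sphere u) (hpc i) hρr.le ht0.le (htG.trans_le ?_)
    exact schrammRadius.antitone ha.le (inner_le_supportFun (fun i ↦ p i - c) _ i)
  calc μ (closedBall 0 (schrammRadius a (lam / 2)))
      ≤ μ (radialSet G) := by
        refine addHaar_closedBall_le_addHaar_radialSet μ hG (fun u ↦ schrammRadius.pos ha _)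
          (schrammRadius.pos ha _) fun u ↦ ?_
        simpa only [G, coe_neg_sphere, neg_neg] using schrammRadius.two_mul_pow_le ha (hwidth u) _
    _ = μ (c +ᵥ radialSet G) := (measure_vadd μ c _).symm
    _ ≤ μ (⋂ i, closedBall (p i) r) := measure_mono hsub

/-- (Jung + Schramm) If the points of `Q` have pairwise distances at most
`λ` and `r > √(2d/(d+1))·(λ/2)`, then
`V(⋂ᵢ B^d[qᵢ, r]) ≥ V(B^d[o, √(r² − ((d−1)/(d+1))·(λ/2)²) − λ/2])`. -/
theorem euclidean_intersection_volume_lower_bound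
    (d N : ℕ) (hd : 2 ≤ d)
    (r lam : ℝ) (hlam : 0 < lam)
    (hr : Real.sqrt (2 * (d : ℝ) / ((d : ℝ) + 1)) * (lam / 2) < r)
    (q : Fin N → EuclideanSpace ℝ (Fin d))
    (hQ : ∀ i j, i ≠ j → dist (q i) (q j) ≤ lam) :
    volume (Metric.closedBall (0 : EuclideanSpace ℝ (Fin d))
        (Real.sqrt (r ^ 2 - (((d : ℝ) - 1) / ((d : ℝ) + 1)) * (lam / 2) ^ 2) - lam / 2)) ≤
      volume (⋂ i, Metric.closedBall (q i) r) := by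
  rcases isEmpty_or_nonempty (Fin N) with hN | hN
  · rw [iInter_of_empty]
    exact measure_mono (subset_univ _)
  have hq : ∀ i j, dist (q i) (q j) ≤ lam := fun i j ↦ by
    rcases eq_or_ne i j with rfl | hij
    · simpa using hlam.le
    · exact hQ i j hij
  have : Nontrivial (EuclideanSpace ℝ (Fin d)) :=
    Module.nontrivial_of_finrank_pos (by rw [finrank_euclideanSpace_fin]; omega)
  obtain ⟨c, hc⟩ := exists_forall_dist_le_jung q hq
  rw [finrank_euclideanSpace_fin] at hc
  have hradius : √(r ^ 2 - ((d - 1) / (d + 1)) * (lam / 2) ^ 2) - lam / 2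
      = schrammRadius (r ^ 2 - (√(2 * d / (d + 1)) * (lam / 2)) ^ 2) (lam / 2) := by
    rw [schrammRadius, mul_pow, Real.sq_sqrt (by positivity)]
    congr 2
    field_simp
    ring
  rw [hradius]
  exact addHaar_closedBall_schrammRadius_le_addHaar_iInter_closedBall volume hc hr hq
end

section
/- Let d ≥ 2, λ > 0, r > 0 with 2r/λ ≥ 1.573, and N ≥ 2.359^d. Then r − (N^{1/d} − 1)(λ/2) ≤ sqrt(r² − ((d−1)/(d+1))(λ/2)²) − λ/2. -/
/-- The key numerical inequality in the proof of the Euclidean intersection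
theorem: for `d ≥ 2`, `λ > 0`, `r > 0` with `2r/λ ≥ 1.573` and `N ≥ 2.359^d`,
`r − (N^{1/d} − 1)·(λ/2) ≤ √(r² − ((d−1)/(d+1))·(λ/2)²) − λ/2`. -/
theorem key_numerical_inequality
    (d N : ℕ) (hd : 2 ≤ d)
    (r lam : ℝ) (hlam : 0 < lam) (hr : 0 < r)
    (hratio : (1.573 : ℝ) ≤ 2 * r / lam)
    (hN : (2.359 : ℝ) ^ d ≤ (N : ℝ)) :
    r - ((N : ℝ) ^ (1 / (d : ℝ)) - 1) * (lam / 2) ≤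
      Real.sqrt (r ^ 2 - (((d : ℝ) - 1) / ((d : ℝ) + 1)) * (lam / 2) ^ 2) - lam / 2 := by
  have hd0 : (0 : ℝ) < (d : ℝ) := by positivity
  have hrl : 1.573 * lam ≤ 2 * r := by
    calc 1.573 * lam ≤ (2 * r / lam) * lam := by
          exact mul_le_mul_of_nonneg_right hratio hlam.le
      _ = 2 * r := by field_simp
  -- Step 1: N^{1/d} ≥ 2.359
  have hroot : (2.359 : ℝ) ≤ (N : ℝ) ^ (1 / (d : ℝ)) := by
    have h1 : ((2.359 : ℝ) ^ d : ℝ) ^ (1 / (d : ℝ)) ≤ (N : ℝ) ^ (1 / (d : ℝ)) :=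
      Real.rpow_le_rpow (by positivity) hN (by positivity)
    have h2 : ((2.359 : ℝ) ^ d : ℝ) ^ (1 / (d : ℝ)) = 2.359 := by
      rw [← Real.rpow_natCast (2.359 : ℝ) d, ← Real.rpow_mul (by norm_num)]
      rw [mul_one_div, div_self hd0.ne', Real.rpow_one]
    rwa [h2] at h1
  -- Step 2: reduce to c = 1 case
  have hfrac : ((d : ℝ) - 1) / ((d : ℝ) + 1) ≤ 1 := by
    rw [div_le_one (by linarith)]; linarith
  have hsq : r ^ 2 - 1 * (lam / 2) ^ 2 ≤
      r ^ 2 - (((d : ℝ) - 1) / ((d : ℝ) + 1)) * (lam / 2) ^ 2 := by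
    nlinarith [sq_nonneg (lam / 2)]
  have hsqrt : Real.sqrt (r ^ 2 - (lam / 2) ^ 2) ≤
      Real.sqrt (r ^ 2 - (((d : ℝ) - 1) / ((d : ℝ) + 1)) * (lam / 2) ^ 2) := by
    apply Real.sqrt_le_sqrt; linarith
  -- Step 3: r - 1.359 * (lam/2) ≤ sqrt(r² - (lam/2)²) - lam/2
  have hkey : r - 0.359 * (lam / 2) ≤ Real.sqrt (r ^ 2 - (lam / 2) ^ 2) := by
    rw [show (0.359 : ℝ) * (lam / 2) = 0.1795 * lam by ring]
    have hpos : 0 ≤ r - 0.1795 * lam := by linarith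
    rw [Real.le_sqrt hpos]
    · nlinarith
    · nlinarith
  have hNstep : r - ((N : ℝ) ^ (1 / (d : ℝ)) - 1) * (lam / 2) ≤ r - 1.359 * (lam / 2) := by
    have : (1.359 : ℝ) ≤ (N : ℝ) ^ (1 / (d : ℝ)) - 1 := by linarith
    nlinarith
  calc r - ((N : ℝ) ^ (1 / (d : ℝ)) - 1) * (lam / 2)
      ≤ r - 1.359 * (lam / 2) := hNstep
    _ = (r - 0.359 * (lam / 2)) - lam / 2 := by ring
    _ ≤ Real.sqrt (r ^ 2 - (lam / 2) ^ 2) - lam / 2 := by linarith [hkey]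
    _ ≤ _ := by linarith [hsqrt]
end
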